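/- Let x⃗ = Σ_{i=1}^t l_i·x⃗_i with integers 0 ≤ l_i ≤ p_i − 1 and x⃗ ≤ δ⃗, and set I = {i : l_i ≤ p_i − 2}. If z⃗ ∈ L satisfies z⃗ ≥ 0 and z⃗ ≰ x⃗, then there exists an index i_0 ∈ I such that z⃗ − (1 + l_{i_0})·x⃗_{i_0} ≥ 0. -/

import Mathlib

open scoped BigOperators

namespace WPL

/-- The rank-one abelian group `L(p₁,…,p_t)`: the quotient of `ℤ^t` by the
subgroup generated by the elements `p 0 • e 0 - p i • e i`. -/
def rel (t : ℕ) [NeZero t] (p : Fin t → ℕ) : Submodule ℤ (Fin t → ℤ) :=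
  Submodule.span ℤ
    { v | ∃ i : Fin t, v = (p 0 : ℤ) • Pi.single (0 : Fin t) (1 : ℤ) - (p i : ℤ) • Pi.single i (1 : ℤ) }

/-- The group `L(p₁,…,p_t)`. -/
abbrev L (t : ℕ) [NeZero t] (p : Fin t → ℕ) : Type :=
  (Fin t → ℤ) ⧸ rel t p

/-- The generator `x⃗ᵢ` of `L`. -/
def xg (t : ℕ) [NeZero t] (p : Fin t → ℕ) (i : Fin t) : L t p :=
  Submodule.Quotient.mk (Pi.single i (1 : ℤ))

/-- The canonical element `c⃗ = p₁ • x⃗₁`. -/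
noncomputable def cg (t : ℕ) [NeZero t] (p : Fin t → ℕ) : L t p :=
  (p 0 : ℤ) • xg t p 0

/-- `y ∈ L_+`, i.e. `y ≥ 0`: `y` is an ℕ-linear combination of the `x⃗ᵢ`. -/
def pos (t : ℕ) [NeZero t] (p : Fin t → ℕ) (y : L t p) : Prop :=
  ∃ a : Fin t → ℕ, y = ∑ i, (a i : ℤ) • xg t p i

/-- The dualizing element `w⃗ = (t-2) • c⃗ - ∑ x⃗ᵢ`. -/
noncomputable def wg (t : ℕ) [NeZero t] (p : Fin t → ℕ) : L t p :=
  ((t : ℤ) - 2) • cg t p - ∑ i, xg t p i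

/-- The dominant element `δ⃗ = c⃗ + 2 • w⃗`. -/
noncomputable def dg (t : ℕ) [NeZero t] (p : Fin t → ℕ) : L t p :=
  cg t p + 2 • wg t p

end WPL

/-!
Every `y ≥ 0` has a normal form `y = n • c⃗ + ∑ rᵢ • x⃗ᵢ` with `n ≥ 0` and `0 ≤ rᵢ < pᵢ`. Conversely,
an element written this way with `0 ≤ rᵢ < pᵢ` is `≥ 0` only if `n ≥ 0`: comparing residues
mod `pᵢ` shows that any representation `∑ aᵢ • x⃗ᵢ` has `aᵢ ≥ rᵢ`, and the degree `x⃗ᵢ ↦ 1/pᵢ`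
then gives `n = ∑ (aᵢ - rᵢ)/pᵢ ≥ 0`. Hence `δ⃗ - ∑ (pᵢ - 1) x⃗ᵢ = -3 c⃗ + ∑ (pᵢ - 1) x⃗ᵢ` is not
`≥ 0`, so `I` is nonempty. Now write `z⃗ = n c⃗ + ∑ rᵢ x⃗ᵢ` in normal form. If `n ≥ 1`, any
`i ∈ I` works after borrowing `c⃗ = pᵢ x⃗ᵢ`. If `n = 0`, then `z⃗ ≰ x⃗` forces `rᵢ > lᵢ` for some
`i`, which lies in `I` because `rᵢ ≤ pᵢ - 1`.
-/

namespace WPL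

variable {t : ℕ} [NeZero t] {p : Fin t → ℕ}

theorem natCast_smul_xg (i : Fin t) : (p i : ℤ) • xg t p i = cg t p := by
  rw [cg, xg, xg, ← Submodule.Quotient.mk_smul, ← Submodule.Quotient.mk_smul,
    Submodule.Quotient.eq, ← neg_sub]
  exact neg_mem (Submodule.subset_span ⟨i, rfl⟩)

theorem sum_natCast_smul_xg : ∑ i, (p i : ℤ) • xg t p i = (t : ℤ) • cg t p := by
  rw [Finset.sum_congr rfl fun i _ => natCast_smul_xg i, Finset.sum_const, Finset.card_univ,
    Fintype.card_fin, natCast_zsmul]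

noncomputable def residue (i : Fin t) : L t p →ₗ[ℤ] ZMod (p i) :=
  (rel t p).liftQ ((Int.castAddHom (ZMod (p i))).toIntLinearMap ∘ₗ LinearMap.proj i) <| by
    rw [rel, Submodule.span_le]
    rintro _ ⟨j, rfl⟩
    by_cases hji : j = i <;> rcases eq_or_ne i 0 with rfl | hi0 <;> simp_all

theorem residue_xg (i j : Fin t) :
    residue i (xg t p j) = if j = i then 1 else 0 := by
  simp [residue, xg, Pi.single_apply, eq_comm, apply_ite (Int.cast : ℤ → ZMod (p i))]

theorem residue_sum_smul_xg (i : Fin t) (b : Fin t → ℤ) :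
    residue i (∑ j, b j • xg t p j) = b i := by
  simp [residue_xg]

theorem residue_cg (i : Fin t) : residue i (cg t p) = 0 := by
  rw [← natCast_smul_xg i, map_zsmul, residue_xg]
  simp

noncomputable def degree (hp : ∀ i, p i ≠ 0) : L t p →ₗ[ℤ] ℚ :=
  (rel t p).liftQ
    { toFun := fun v => ∑ i, (v i : ℚ) / p i
      map_add' := fun v w => by simp [add_div, Finset.sum_add_distrib]
      map_smul' := fun n v => by simp [Finset.mul_sum, mul_div_assoc] } <| by
    rw [rel, Submodule.span_le]
    rintro _ ⟨j, rfl⟩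
    simp [Pi.single_apply, sub_div, Finset.sum_sub_distrib, ite_div, hp]

theorem degree_xg (hp : ∀ i, p i ≠ 0) (i : Fin t) : degree hp (xg t p i) = 1 / p i := by
  simp [degree, xg, Pi.single_apply, ite_div]

theorem degree_cg (hp : ∀ i, p i ≠ 0) : degree hp (cg t p) = 1 := by
  rw [cg, map_zsmul, degree_xg]
  simp [hp]

theorem degree_sum_smul_xg (hp : ∀ i, p i ≠ 0) (b : Fin t → ℤ) :
    degree hp (∑ j, b j • xg t p j) = ∑ j, (b j : ℚ) / p j := by
  simp [degree_xg, div_eq_mul_inv]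

theorem pos_add {y z : L t p} (hy : pos t p y) (hz : pos t p z) : pos t p (y + z) := by
  obtain ⟨a, rfl⟩ := hy
  obtain ⟨b, rfl⟩ := hz
  exact ⟨a + b, by simp [add_smul, Finset.sum_add_distrib]⟩

theorem pos_sum_smul_xg {b : Fin t → ℤ} (hb : ∀ i, 0 ≤ b i) : pos t p (∑ i, b i • xg t p i) :=
  ⟨fun i => (b i).toNat, by simp [Int.toNat_of_nonneg (hb _)]⟩

theorem pos_smul_xg {k : ℤ} (hk : 0 ≤ k) (i : Fin t) : pos t p (k • xg t p i) :=
  ⟨Pi.single i k.toNat, by simp [Pi.single_apply, ite_smul, Int.toNat_of_nonneg hk]⟩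

theorem pos_smul_cg {n : ℤ} (hn : 0 ≤ n) : pos t p (n • cg t p) := by
  rw [← natCast_smul_xg 0, smul_smul]
  exact pos_smul_xg (by positivity) 0

theorem pos_sum_smul_xg_sub_sum {a b : Fin t → ℤ} (h : ∀ i, b i ≤ a i) :
    pos t p (∑ i, a i • xg t p i - ∑ i, b i • xg t p i) := by
  simp_rw [← Finset.sum_sub_distrib, ← sub_smul]
  exact pos_sum_smul_xg fun i => sub_nonneg.2 (h i)

theorem pos_sum_smul_xg_sub {b : Fin t → ℤ} (hb : ∀ j, 0 ≤ b j) {k : ℤ} {i : Fin t}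
    (hk : k ≤ b i) : pos t p (∑ j, b j • xg t p j - k • xg t p i) := by
  convert pos_sum_smul_xg_sub_sum (a := b) (b := Pi.single i k) fun j => ?_ using 2
  · simp [Pi.single_apply, ite_smul]
  · rcases eq_or_ne j i with rfl | hj
    · simpa using hk
    · simpa [hj] using hb j

theorem pos_smul_cg_add_sub_smul_xg {n : ℤ} (hn : 1 ≤ n) {y : L t p} (hy : pos t p y) {k : ℤ}
    {i : Fin t} (hk : k ≤ p i) : pos t p (n • cg t p + y - k • xg t p i) := by
  have hborrow : n • cg t p + y - k • xg t p i
      = (n - 1) • cg t p + y + ((p i : ℤ) - k) • xg t p i := by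
    linear_combination (norm := module) -natCast_smul_xg (p := p) i
  rw [hborrow]
  exact pos_add (pos_add (pos_smul_cg (by omega)) hy) (pos_smul_xg (by omega) i)

theorem exists_eq_smul_cg_add_sum (hp : ∀ i, p i ≠ 0) {y : L t p} (hy : pos t p y) :
    ∃ (n : ℕ) (r : Fin t → ℕ), (∀ i, r i < p i) ∧
      y = (n : ℤ) • cg t p + ∑ i, (r i : ℤ) • xg t p i := by
  obtain ⟨a, rfl⟩ := hy
  refine ⟨∑ i, a i / p i, fun i => a i % p i, fun i => Nat.mod_lt _ (Nat.pos_of_ne_zero (hp i)), ?_⟩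
  have hdiv (i : Fin t) : (a i : ℤ) • xg t p i
      = ((a i / p i : ℕ) : ℤ) • cg t p + ((a i % p i : ℕ) : ℤ) • xg t p i := by
    rw [← natCast_smul_xg i, smul_smul, ← add_smul]
    exact_mod_cast congrArg (· • xg t p i) (Nat.div_add_mod' (a i) (p i)).symm
  simp only [hdiv, Finset.sum_add_distrib, ← Finset.sum_smul, Nat.cast_sum]

theorem nonneg_of_pos_smul_cg_add_sum (hp : ∀ i, p i ≠ 0) {n : ℤ} {b : Fin t → ℕ}
    (hb : ∀ i, b i < p i) (h : pos t p (n • cg t p + ∑ i, (b i : ℤ) • xg t p i)) : 0 ≤ n := by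
  obtain ⟨a, ha⟩ := h
  have hba (i : Fin t) : b i ≤ a i := by
    have hres := congrArg (residue i) ha
    rw [map_add, map_zsmul, residue_cg, smul_zero, zero_add, residue_sum_smul_xg,
      residue_sum_smul_xg, Int.cast_natCast, Int.cast_natCast] at hres
    exact ((ZMod.natCast_eq_natCast_iff _ _ _).1 hres).le_of_lt_add (by have := hb i; omega)
  have hdeg := congrArg (degree hp) ha
  rw [map_add, map_zsmul, degree_cg, degree_sum_smul_xg, degree_sum_smul_xg, zsmul_one] at hdeg
  simp only [Int.cast_natCast] at hdeg
  have hsum : (n : ℚ) = ∑ i, ((a i : ℚ) - b i) / p i := by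
    simp only [sub_div, Finset.sum_sub_distrib]
    linarith
  have hnonneg : (0 : ℚ) ≤ n := hsum ▸ Finset.sum_nonneg fun i _ =>
    div_nonneg (sub_nonneg.2 (by exact_mod_cast hba i)) (Nat.cast_nonneg _)
  exact_mod_cast hnonneg

theorem not_pos_dg_sub_sum_pred (hp : ∀ i, p i ≠ 0) :
    ¬ pos t p (dg t p - ∑ i, ((p i : ℤ) - 1) • xg t p i) := by
  have hpred (i : Fin t) : ((p i - 1 : ℕ) : ℤ) = p i - 1 := by have := hp i; omega
  have hnormal : dg t p - ∑ i, ((p i : ℤ) - 1) • xg t p i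
      = (-3 : ℤ) • cg t p + ∑ i, ((p i - 1 : ℕ) : ℤ) • xg t p i := by
    simp only [hpred, sub_smul, one_smul, Finset.sum_sub_distrib, sum_natCast_smul_xg, dg, wg]
    module
  rw [hnormal]
  intro h
  have := nonneg_of_pos_smul_cg_add_sum hp (fun i => by have := hp i; omega) h
  norm_num at this

theorem exists_le_sub_two_of_pos_dg_sub (hp : ∀ i, p i ≠ 0) {l : Fin t → ℤ}
    (hl : ∀ i, l i ≤ p i - 1) (h : pos t p (dg t p - ∑ i, l i • xg t p i)) :
    ∃ i, l i ≤ p i - 2 := by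
  by_contra! H
  obtain rfl : l = fun i => (p i : ℤ) - 1 := funext fun i => by linarith [hl i, H i]
  exact not_pos_dg_sub_sum_pred hp h

end WPL

open WPL in
theorem exists_index_sub_pos_general
    (t : ℕ) [NeZero t] (p : Fin t → ℕ) (hp : ∀ i, 2 ≤ p i)
    (l : Fin t → ℤ) (hl : ∀ i, 0 ≤ l i ∧ l i ≤ (p i : ℤ) - 1)
    (xv : L t p) (hxv : xv = ∑ i, l i • xg t p i)
    (hxd : pos t p (dg t p - xv))
    (I : Finset (Fin t)) (hI : I = Finset.univ.filter (fun i => l i ≤ (p i : ℤ) - 2))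
    (z : L t p) (hz : pos t p z) (hzx : ¬ pos t p (xv - z)) :
    ∃ i ∈ I, pos t p (z - (1 + l i) • xg t p i) := by
  have hp0 (i : Fin t) : p i ≠ 0 := by have := hp i; omega
  subst hxv hI
  obtain ⟨M, r, hr, rfl⟩ := exists_eq_smul_cg_add_sum hp0 hz
  simp only [Finset.mem_filter, Finset.mem_univ, true_and]
  rcases Nat.eq_zero_or_pos M with rfl | hM
  · rw [Nat.cast_zero, zero_smul, zero_add] at hzx ⊢
    obtain ⟨i, hi⟩ : ∃ i, l i < r i := by
      by_contra! hrl
      exact hzx (pos_sum_smul_xg_sub_sum hrl)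
    exact ⟨i, by have := hr i; omega, pos_sum_smul_xg_sub (fun j => Nat.cast_nonneg _) (by omega)⟩
  · obtain ⟨i, hi⟩ := exists_le_sub_two_of_pos_dg_sub hp0 (fun i => (hl i).2) hxd
    exact ⟨i, hi, pos_smul_cg_add_sub_smul_xg (by omega)
      (pos_sum_smul_xg fun j => Nat.cast_nonneg _) (by omega)⟩

open WPL in
/-- if `z⃗ ≥ 0` and `z⃗ ≰ x⃗` then `z⃗ - (1+l_{i₀}) x⃗_{i₀} ≥ 0`
for some `i₀ ∈ I = {i : lᵢ ≤ pᵢ - 2}`. -/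
theorem exists_index_sub_pos
    (t : ℕ) [NeZero t] (ht : 3 ≤ t) (p : Fin t → ℕ) (hp : ∀ i, 2 ≤ p i)
    (l : Fin t → ℤ) (hl : ∀ i, 0 ≤ l i ∧ l i ≤ (p i : ℤ) - 1)
    (xv : L t p) (hxv : xv = ∑ i, l i • xg t p i)
    (hxd : pos t p (dg t p - xv))
    (I : Finset (Fin t)) (hI : I = Finset.univ.filter (fun i => l i ≤ (p i : ℤ) - 2))
    (z : L t p) (hz : pos t p z) (hzx : ¬ pos t p (xv - z)) :
    ∃ i ∈ I, pos t p (z - (1 + l i) • xg t p i) :=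
  exists_index_sub_pos_general t p hp l hl xv hxv hxd I hI z hz hzx
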